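/- Let D = graph ♯_P ⊆ TM ⊕ T*M for a bivector field P on M and let Z be a vector field and f a smooth function on M. Then Z is an infinitesimal conformal automorphism of D, i.e., X⊕α ∈ Γ(D) implies ([Z,X] − fX) ⊕ L_Z α ∈ Γ(D), if and only if L_Z P = f P. -/

import Mathlib

open scoped BigOperators

/- Coordinate model of multivector calculus on the manifold `M = ℝ^ι`:
vector fields, 1-forms, bivector and trivector fields are given by their
(smooth) components. -/

/-- Partial derivative `∂_l f`. -/
noncomputable def pd {ι : Type*} [Fintype ι] [DecidableEq ι] (l : ι)
    (f : (ι → ℝ) → ℝ) (x : ι → ℝ) : ℝ :=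
  fderiv ℝ f x (Pi.single l 1)

/-- `♯_P α`, defined by `β(♯_P α) = P(α,β)`; in components
`(♯_P α)^j = Σᵢ P^{ij} αᵢ`. -/
noncomputable def sharp {ι : Type*} [Fintype ι]
    (P : (ι → ℝ) → ι → ι → ℝ) (α : (ι → ℝ) → ι → ℝ) :
    (ι → ℝ) → ι → ℝ :=
  fun x j => ∑ i, P x i j * α x i

/-- Evaluation `P(α,β) = Σ P^{ij} αᵢ βⱼ` of a bivector field on two 1-forms. -/
noncomputable def evBV {ι : Type*} [Fintype ι]
    (P : (ι → ℝ) → ι → ι → ℝ) (α β : (ι → ℝ) → ι → ℝ) : (ι → ℝ) → ℝ :=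
  fun x => ∑ i, ∑ j, P x i j * α x i * β x j

/-- Evaluation `T(α,β,γ)` of a trivector field on three 1-forms. -/
noncomputable def evTV {ι : Type*} [Fintype ι]
    (T : (ι → ℝ) → ι → ι → ι → ℝ) (α β γ : (ι → ℝ) → ι → ℝ) : (ι → ℝ) → ℝ :=
  fun x => ∑ i, ∑ j, ∑ k, T x i j k * α x i * β x j * γ x k

/-- Lie bracket of vector fields. -/
noncomputable def vbr {ι : Type*} [Fintype ι] [DecidableEq ι]
    (X Y : (ι → ℝ) → ι → ℝ) : (ι → ℝ) → ι → ℝ :=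
  fun x i => ∑ l, (X x l * pd l (fun y => Y y i) x
    - Y x l * pd l (fun y => X y i) x)

/-- Lie derivative of a 1-form along a vector field:
`(L_X α)ᵢ = Σ_l (X^l ∂_l αᵢ + α_l ∂ᵢ X^l)`. -/
noncomputable def lieCov {ι : Type*} [Fintype ι] [DecidableEq ι]
    (X α : (ι → ℝ) → ι → ℝ) : (ι → ℝ) → ι → ℝ :=
  fun x i => ∑ l, (X x l * pd l (fun y => α y i) x
    + α x l * pd i (fun y => X y l) x)

/-- Lie derivative of a bivector field along a vector field:
`(L_X P)^{ij} = Σ_l (X^l ∂_l P^{ij} − P^{lj} ∂_l X^i − P^{il} ∂_l X^j)`. -/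
noncomputable def lieBV {ι : Type*} [Fintype ι] [DecidableEq ι]
    (X : (ι → ℝ) → ι → ℝ) (P : (ι → ℝ) → ι → ι → ℝ) :
    (ι → ℝ) → ι → ι → ℝ :=
  fun x i j => ∑ l, (X x l * pd l (fun y => P y i j) x
    - P x l j * pd l (fun y => X y i) x
    - P x i l * pd l (fun y => X y j) x)

/-- Schouten–Nijenhuis bracket `[P,P]` of a bivector field with itself:
`[P,P]^{ijk} = 2 Σ_l (P^{il} ∂_l P^{jk} + P^{jl} ∂_l P^{ki} + P^{kl} ∂_l P^{ij})`. -/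
noncomputable def schoutenPP {ι : Type*} [Fintype ι] [DecidableEq ι]
    (P : (ι → ℝ) → ι → ι → ℝ) : (ι → ℝ) → ι → ι → ι → ℝ :=
  fun x i j k => 2 * ∑ l, (P x i l * pd l (fun y => P y j k) x
    + P x j l * pd l (fun y => P y k i) x
    + P x k l * pd l (fun y => P y i j) x)

/-- Wedge `E ∧ P` of a vector field with a bivector field:
`(E∧P)^{ijk} = E^i P^{jk} + E^j P^{ki} + E^k P^{ij}`. -/
noncomputable def wedgeVP {ι : Type*} [Fintype ι]
    (E : (ι → ℝ) → ι → ℝ) (P : (ι → ℝ) → ι → ι → ℝ) :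
    (ι → ℝ) → ι → ι → ι → ℝ :=
  fun x i j k => E x i * P x j k + E x j * P x k i + E x k * P x i j

/-- `dα(X,Y) = Σ (∂ᵢ αⱼ − ∂ⱼ αᵢ) X^i Y^j`. -/
noncomputable def dOne {ι : Type*} [Fintype ι] [DecidableEq ι]
    (α X Y : (ι → ℝ) → ι → ℝ) : (ι → ℝ) → ℝ :=
  fun x => ∑ i, ∑ j, (pd i (fun y => α y j) x - pd j (fun y => α y i) x)
    * X x i * Y x j

/-- Pairing `γ(X) = Σ γ_k X^k` of a 1-form with a vector field. -/
noncomputable def pairCV {ι : Type*} [Fintype ι]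
    (γ X : (ι → ℝ) → ι → ℝ) : (ι → ℝ) → ℝ :=
  fun x => ∑ k, γ x k * X x k

/-- The bracket of 1-forms
`{α,β}_P = L_{♯_P α} β − L_{♯_P β} α − d(P(α,β))`. -/
noncomputable def formBr {ι : Type*} [Fintype ι] [DecidableEq ι]
    (P : (ι → ℝ) → ι → ι → ℝ) (α β : (ι → ℝ) → ι → ℝ) :
    (ι → ℝ) → ι → ℝ :=
  fun x i => lieCov (sharp P α) β x i - lieCov (sharp P β) α x i
    - pd i (evBV P α β) x

/-- Interior product `i(α∧β)T` of a trivector with a decomposable 2-form: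
`(i(α∧β)T)^k = Σ_{i,j} αᵢ βⱼ T^{ijk}`. -/
noncomputable def intTV {ι : Type*} [Fintype ι]
    (α β : (ι → ℝ) → ι → ℝ) (T : (ι → ℝ) → ι → ι → ι → ℝ) :
    (ι → ℝ) → ι → ℝ :=
  fun x k => ∑ i, ∑ j, α x i * β x j * T x i j k


section Helpers
variable {ι : Type*} [Fintype ι] [DecidableEq ι]

lemma pd_const (l : ι) (c : ℝ) (x : ι → ℝ) : pd l (fun _ => c) x = 0 := by
  simp [pd]

lemma pd_sum {κ : Type*} (l : ι) (s : Finset κ)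
    (g : κ → (ι → ℝ) → ℝ) (x : ι → ℝ) (hg : ∀ k ∈ s, DifferentiableAt ℝ (g k) x) :
    pd l (fun y => ∑ k ∈ s, g k y) x = ∑ k ∈ s, pd l (g k) x := by
  simp only [pd]
  rw [fderiv_fun_sum hg]
  simp

lemma pd_mul (l : ι) (g h : (ι → ℝ) → ℝ) (x : ι → ℝ) (hg : DifferentiableAt ℝ g x)
    (hh : DifferentiableAt ℝ h x) :
    pd l (fun y => g y * h y) x = pd l g x * h x + g x * pd l h x := by
  simp only [pd]
  rw [fderiv_fun_mul hg hh]
  simp only [ContinuousLinearMap.add_apply, ContinuousLinearMap.smul_apply, smul_eq_mul]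
  ring

end Helpers

/-- For `D = graph ♯_P`: a vector field `Z` is an infinitesimal conformal
automorphism of `D` with function `f` — i.e. for every (smooth) section
`♯_P α ⊕ α` of `D` the pair `([Z,♯_P α] − f ♯_P α) ⊕ L_Z α` is again a
section of `D` — if and only if `L_Z P = f P`. -/
theorem stmt19 (ι : Type*) [Fintype ι] [DecidableEq ι]
    (P : (ι → ℝ) → ι → ι → ℝ) (Z : (ι → ℝ) → ι → ℝ) (f : (ι → ℝ) → ℝ)
    (hPskew : ∀ x i j, P x i j = -P x j i)
    (hP : ∀ i j, ContDiff ℝ (⊤ : ℕ∞) fun x => P x i j)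
    (hZ : ∀ i, ContDiff ℝ (⊤ : ℕ∞) fun x => Z x i)
    (hf : ContDiff ℝ (⊤ : ℕ∞) f) :
    (∀ α : (ι → ℝ) → ι → ℝ, (∀ i, ContDiff ℝ (⊤ : ℕ∞) fun x => α x i) →
      ∀ x i, vbr Z (sharp P α) x i - f x * sharp P α x i =
        sharp P (lieCov Z α) x i) ↔
    (∀ x i j, lieBV Z P x i j = f x * P x i j) := by
  constructor
  · intro h x i j
    have hα : ∀ m : ι, ContDiff ℝ (⊤ : ℕ∞) fun _ : ι → ℝ => (Pi.single i 1 : ι → ℝ) m :=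
      fun m => contDiff_const
    have key := h (fun _ => Pi.single i 1) hα x j
    have hs : sharp P (fun _ => Pi.single i 1) = fun y k => P y i k := by
      funext y k
      simp only [sharp]
      rw [Finset.sum_eq_single i]
      · simp
      · intro b _ hb; simp [Pi.single_apply, hb]
      · simp
    have hl : ∀ m, lieCov Z (fun _ => Pi.single i 1) x m = pd m (fun y => Z y i) x := by
      intro m
      simp only [lieCov]
      rw [Finset.sum_congr rfl (fun l (_ : l ∈ Finset.univ) => by
        rw [pd_const l ((Pi.single i 1 : ι → ℝ) m) x, mul_zero, zero_add])]
      rw [Finset.sum_eq_single i]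
      · simp
      · intro b _ hb; simp [Pi.single_apply, hb]
      · simp
    rw [hs] at key
    simp only [sharp, vbr, hl] at key
    simp only [lieBV]
    have e1 : (∑ l, (Z x l * pd l (fun y => P y i j) x - P x l j * pd l (fun y => Z y i) x
          - P x i l * pd l (fun y => Z y j) x))
        = (∑ l, (Z x l * pd l (fun y => P y i j) x - P x i l * pd l (fun y => Z y j) x))
          - ∑ l, P x l j * pd l (fun y => Z y i) x := by
      rw [← Finset.sum_sub_distrib]
      exact Finset.sum_congr rfl fun l _ => by ring
    rw [e1]
    linarith [key]
  · intro h α hα x i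
    have hPd : ∀ m j, DifferentiableAt ℝ (fun y => P y m j) x :=
      fun m j => ((hP m j).differentiable (by simp)).differentiableAt
    have hαd : ∀ m, DifferentiableAt ℝ (fun y => α y m) x :=
      fun m => ((hα m).differentiable (by simp)).differentiableAt
    simp only [vbr, sharp, lieCov]
    have hpd : ∀ l : ι, pd l (fun y => ∑ m, P y m i * α y m) x
        = ∑ m, (pd l (fun y => P y m i) x * α x m + P x m i * pd l (fun y => α y m) x) := by
      intro l
      rw [pd_sum l Finset.univ (fun m y => P y m i * α y m) x (fun m _ => (hPd m i).mul (hαd m))]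
      exact Finset.sum_congr rfl fun m _ => pd_mul l _ _ x (hPd m i) (hαd m)
    simp only [hpd]
    have hkey : ∀ m : ι, f x * P x m i
        = ∑ l, (Z x l * pd l (fun y => P y m i) x - P x l i * pd l (fun y => Z y m) x
            - P x m l * pd l (fun y => Z y i) x) := by
      intro m; rw [← h x m i]; rfl
    have hf2 : f x * ∑ m, P x m i * α x m
        = ∑ m, ∑ l, (Z x l * pd l (fun y => P y m i) x - P x l i * pd l (fun y => Z y m) x
            - P x m l * pd l (fun y => Z y i) x) * α x m := by
      rw [Finset.mul_sum]
      refine Finset.sum_congr rfl fun m _ => ?_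
      rw [show f x * (P x m i * α x m) = (f x * P x m i) * α x m by ring, hkey m,
        Finset.sum_mul]
    have h1 : (∑ l, (Z x l * (∑ m, (pd l (fun y => P y m i) x * α x m
            + P x m i * pd l (fun y => α y m) x))
          - (∑ m, P x m l * α x m) * pd l (fun y => Z y i) x))
        = ∑ m, ∑ l, (Z x l * (pd l (fun y => P y m i) x * α x m
            + P x m i * pd l (fun y => α y m) x)
          - P x m l * α x m * pd l (fun y => Z y i) x) := by
      rw [Finset.sum_comm]
      refine Finset.sum_congr rfl fun l _ => ?_
      rw [Finset.mul_sum, Finset.sum_mul, ← Finset.sum_sub_distrib]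
    rw [h1, hf2, ← Finset.sum_sub_distrib]
    calc (∑ m, ((∑ l, (Z x l * (pd l (fun y => P y m i) x * α x m
            + P x m i * pd l (fun y => α y m) x)
          - P x m l * α x m * pd l (fun y => Z y i) x))
        - ∑ l, (Z x l * pd l (fun y => P y m i) x - P x l i * pd l (fun y => Z y m) x
            - P x m l * pd l (fun y => Z y i) x) * α x m))
        = ∑ m, ∑ l, (Z x l * P x m i * pd l (fun y => α y m) x
            + P x l i * pd l (fun y => Z y m) x * α x m) := by
          refine Finset.sum_congr rfl fun m _ => ?_
          rw [← Finset.sum_sub_distrib]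
          exact Finset.sum_congr rfl fun l _ => by ring
      _ = ∑ m, ∑ l, (Z x l * P x m i * pd l (fun y => α y m) x)
          + ∑ m, ∑ l, (P x l i * pd l (fun y => Z y m) x * α x m) := by
          rw [← Finset.sum_add_distrib]
          exact Finset.sum_congr rfl fun m _ => Finset.sum_add_distrib
      _ = ∑ m, ∑ l, (Z x l * P x m i * pd l (fun y => α y m) x)
          + ∑ m, ∑ l, (P x m i * (α x l * pd m (fun y => Z y l) x)) := by
          congr 1
          rw [Finset.sum_comm]
          exact Finset.sum_congr rfl fun l _ => Finset.sum_congr rfl fun m _ => by ring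
      _ = ∑ m, P x m i * ∑ l, (Z x l * pd l (fun y => α y m) x
            + α x l * pd m (fun y => Z y l) x) := by
          rw [← Finset.sum_add_distrib]
          refine Finset.sum_congr rfl fun m _ => ?_
          rw [Finset.mul_sum, ← Finset.sum_add_distrib]
          exact Finset.sum_congr rfl fun l _ => by ring
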